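/- arXiv:2310.07041 — 3 statements merged into one kernel-verified Lean document; each statement's English description precedes it below -/
import Mathlib

section
/- Let G be an abelian group and g ∈ G. Define M(G)(g) to be the subgroup of G generated by all elements μ(g,x) and μ(x,g) where μ ranges over all biadditive multiplications on G and x over G. Then the principal absolute ideal ⟨g⟩_AI equals ⟨g⟩ + M(G)(g), i.e., the subgroup generated by g together with M(G)(g). -/
def IsAbsoluteIdeal {G : Type*} [AddCommGroup G] (A : AddSubgroup G) : Prop :=
  ∀ μ : G →+ G →+ G, ∀ a ∈ A, ∀ g : G, μ a g ∈ A ∧ μ g a ∈ A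

def principalAI {G : Type*} [AddCommGroup G] (g : G) : AddSubgroup G :=
  sInf {A : AddSubgroup G | IsAbsoluteIdeal A ∧ g ∈ A}

/-- `M(G)(g)`: the subgroup generated by all products `μ(g,x)` and `μ(x,g)`. -/
def MG {G : Type*} [AddCommGroup G] (g : G) : AddSubgroup G :=
  AddSubgroup.closure {y | ∃ (μ : G →+ G →+ G) (x : G), y = μ g x ∨ y = μ x g}

/-!
A product `ν(μ(g,z), x)` is again a product of `g` with `x`, for the multiplication
`ν ∘ μ(·, z)`; similarly on the other side. Hence `M(G)(g)` is an absolute ideal, and so is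
`⟨g⟩ + M(G)(g)`. Conversely every absolute ideal containing `g` contains all `μ(g,x)`, `μ(x,g)`.
-/

section

variable {G : Type*} [AddCommGroup G]

theorem isAbsoluteIdeal_iff_forall_mul_mem (A : AddSubgroup G) :
    IsAbsoluteIdeal A ↔ ∀ μ : G →+ G →+ G, ∀ a ∈ A, ∀ x : G, μ a x ∈ A :=
  ⟨fun hA μ a ha x => (hA μ a ha x).1, fun hA μ a ha x => ⟨hA μ a ha x, hA μ.flip a ha x⟩⟩

theorem mul_left_mem_MG (g : G) (μ : G →+ G →+ G) (x : G) : μ g x ∈ MG g :=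
  AddSubgroup.subset_closure ⟨μ, x, Or.inl rfl⟩

theorem isAbsoluteIdeal_MG (g : G) : IsAbsoluteIdeal (MG g) := by
  refine (isAbsoluteIdeal_iff_forall_mul_mem _).2 fun ν a ha x => ?_
  induction ha using AddSubgroup.closure_induction with
  | mem y hy =>
    obtain ⟨μ, z, rfl | rfl⟩ := hy
    · exact mul_left_mem_MG g (ν.comp (μ.flip z)) x
    · exact mul_left_mem_MG g (ν.comp (μ z)) x
  | zero => simp
  | add b c _ _ hb hc => simpa using add_mem hb hc
  | neg b _ hb => simpa using neg_mem hb

theorem MG_le_of_isAbsoluteIdeal {g : G} {A : AddSubgroup G} (hA : IsAbsoluteIdeal A)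
    (hg : g ∈ A) : MG g ≤ A := by
  rw [MG, AddSubgroup.closure_le]
  rintro y ⟨μ, x, rfl | rfl⟩
  exacts [(hA μ g hg x).1, (hA μ g hg x).2]

theorem IsAbsoluteIdeal.zmultiples_sup {g : G} {A : AddSubgroup G} (hA : IsAbsoluteIdeal A)
    (hMG : MG g ≤ A) : IsAbsoluteIdeal (AddSubgroup.zmultiples g ⊔ A) := by
  refine (isAbsoluteIdeal_iff_forall_mul_mem _).2 fun μ a ha x => ?_
  suffices AddSubgroup.zmultiples g ⊔ A ≤ A.comap (μ.flip x) from
    AddSubgroup.mem_sup_right (this ha)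
  refine sup_le (AddSubgroup.zmultiples_le.2 ?_) fun b hb => (hA μ b hb x).1
  exact hMG (mul_left_mem_MG g μ x)

end

/-- The principal absolute ideal equals `⟨g⟩ + M(G)(g)`. -/
theorem principalAI_eq {G : Type*} [AddCommGroup G] (g : G) :
    principalAI g = AddSubgroup.zmultiples g ⊔ MG g := by
  apply le_antisymm
  · refine sInf_le ⟨(isAbsoluteIdeal_MG g).zmultiples_sup le_rfl, ?_⟩
    exact AddSubgroup.mem_sup_left (AddSubgroup.mem_zmultiples g)
  · refine le_sInf fun A ⟨hA, hg⟩ => sup_le ?_ (MG_le_of_isAbsoluteIdeal hA hg)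
    exact AddSubgroup.zmultiples_le.2 hg
end

section
/- Every nonzero element a of a unital subring R of ℚ can be written uniquely as a = m·u, where m is a positive integer all of whose prime factors are non-invertible in R, and u is a unit of R. -/
/-- If `q ∈ R` then the inverse of its denominator is in `R`. -/
lemma den_inv_mem (R : Subring ℚ) {q : ℚ} (hq : q ∈ R) : ((q.den : ℚ))⁻¹ ∈ R := by
  have hcop : IsCoprime q.num (q.den : ℤ) := by
    rw [Int.isCoprime_iff_gcd_eq_one]
    exact q.reduced
  obtain ⟨u, v, huv⟩ := hcop
  have hd : (q.den : ℚ) ≠ 0 := by exact_mod_cast q.den_nz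
  have hq' : q * (q.den : ℚ) = (q.num : ℚ) := by
    have h := div_mul_cancel₀ (q.num : ℚ) hd
    rwa [Rat.num_div_den q] at h
  have hmul : ((u : ℚ) * q + (v : ℚ)) * (q.den : ℚ) = 1 := by
    calc ((u : ℚ) * q + v) * q.den = (u : ℚ) * (q * q.den) + v * q.den := by ring
      _ = (u : ℚ) * q.num + v * q.den := by rw [hq']
      _ = ((u * q.num + v * q.den : ℤ) : ℚ) := by push_cast; ring
      _ = 1 := by rw [huv]; norm_num
  rw [← eq_inv_of_mul_eq_one_left hmul]
  exact R.add_mem (R.mul_mem (intCast_mem R u) hq) (intCast_mem R v)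

lemma prime_inv_mem (R : Subring ℚ) {k p : ℕ} (hk0 : k ≠ 0) (hk : ((k : ℚ))⁻¹ ∈ R)
    (hp : p ∣ k) : ((p : ℚ))⁻¹ ∈ R := by
  obtain ⟨c, rfl⟩ := hp
  have hp0 : (p : ℚ) ≠ 0 := by
    rintro h
    exact hk0 (by simp [Nat.cast_eq_zero.mp h])
  have hc0 : (c : ℚ) ≠ 0 := by
    rintro h
    exact hk0 (by simp [Nat.cast_eq_zero.mp h])
  have : ((p : ℚ))⁻¹ = (c : ℚ) * ((p * c : ℕ) : ℚ)⁻¹ := by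
    push_cast
    field_simp
  rw [this]
  exact R.mul_mem (natCast_mem R c) hk

lemma exists_fact (R : Subring ℚ) : ∀ s : ℕ, ∀ a : R, a ≠ 0 → ((a : ℚ)).num.natAbs = s →
    ∃ m : ℕ, ∃ u : Rˣ, 0 < m ∧ (∀ p : ℕ, p.Prime → p ∣ m → ((p : ℚ)⁻¹ ∉ R)) ∧
      a = (m : R) * (u : R) := by
  intro s
  induction s using Nat.strong_induction_on with
  | _ s ih =>
    intro a ha hs
    have hq0 : (a : ℚ) ≠ 0 := fun h => ha (Subtype.ext h)
    have hnum0 : ((a : ℚ)).num ≠ 0 := Rat.num_ne_zero.mpr hq0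
    by_cases hex : ∃ p : ℕ, p.Prime ∧ p ∣ s ∧ ((p : ℚ))⁻¹ ∈ R
    · obtain ⟨p, hp, hpdvd, hpinv⟩ := hex
      have hp0 : (p : ℚ) ≠ 0 := by exact_mod_cast hp.ne_zero
      have hd0 : (((a : ℚ).den : ℚ)) ≠ 0 := by exact_mod_cast (a : ℚ).den_nz
      set b : R := a * ⟨((p : ℚ))⁻¹, hpinv⟩ with hb
      have hbq : (b : ℚ) = (a : ℚ) * ((p : ℚ))⁻¹ := rfl
      have hb0 : b ≠ 0 := by
        intro h
        apply hq0
        have h2 : (b : ℚ) = 0 := by rw [h]; rfl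
        rw [hbq] at h2
        rcases mul_eq_zero.mp h2 with h' | h'
        · exact h'
        · exact absurd h' (inv_ne_zero hp0)
      have hpn : (p : ℤ) ∣ (a : ℚ).num := by
        rw [← hs] at hpdvd
        exact (Int.natCast_dvd_natCast.mpr hpdvd).trans (Int.natAbs_dvd.mpr dvd_rfl)
      obtain ⟨c, hc⟩ := hpn
      have hbq2 : (b : ℚ) = (c : ℚ) / (((a : ℚ).den : ℤ) : ℚ) := by
        rw [hbq]
        conv_lhs => rw [← Rat.num_div_den (a : ℚ)]
        rw [hc]
        push_cast
        field_simp
      have hcop : c.natAbs.Coprime (a : ℚ).den := by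
        have h := (a : ℚ).reduced
        rw [hc, Int.natAbs_mul] at h
        exact Nat.Coprime.coprime_dvd_left (Dvd.intro_left _ rfl) h
      have hbnum : (b : ℚ).num = c := by
        rw [hbq2]
        exact Rat.num_div_eq_of_coprime (by exact_mod_cast (a : ℚ).pos) (by simpa using hcop)
      have hlt : c.natAbs < s := by
        have hmul : c.natAbs * p = s := by
          rw [← hs, hc, Int.natAbs_mul]
          simp [Nat.mul_comm]
        have hc0 : c.natAbs ≠ 0 := by
          intro h
          apply hnum0
          rw [hc, Int.natAbs_eq_zero.mp h, mul_zero]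
        calc c.natAbs < c.natAbs * p := by
              nlinarith [hp.two_le, Nat.pos_of_ne_zero hc0]
          _ = s := hmul
      obtain ⟨m, u, hm, hmp, heq⟩ := ih c.natAbs hlt b hb0 (by rw [hbnum])
      have hpmem : (p : ℚ) ∈ R := natCast_mem R p
      refine ⟨m, (⟨⟨(p : ℚ), hpmem⟩, ⟨(p : ℚ)⁻¹, hpinv⟩, ?_, ?_⟩ : Rˣ) * u, hm, hmp, ?_⟩
      · ext; simp [hp0]
      · ext; simp [hp0]
      · have ha2 : a = b * ⟨(p : ℚ), hpmem⟩ := by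
          ext
          show (a : ℚ) = (a : ℚ) * (p : ℚ)⁻¹ * (p : ℚ)
          field_simp
        rw [ha2, heq]
        push_cast
        ring
    · push_neg at hex
      have hs0 : s ≠ 0 := by
        rw [← hs]
        simpa using hnum0
      have hd0 : (((a : ℚ).den : ℚ)) ≠ 0 := by exact_mod_cast (a : ℚ).den_nz
      have hsq0 : (s : ℚ) ≠ 0 := by exact_mod_cast hs0
      set sgn : ℚ := ((a : ℚ).num : ℚ) / ((s : ℚ)) with hsgn
      have habs : ((((a : ℚ)).num.natAbs : ℤ) : ℚ) = (s : ℚ) := by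
        rw [hs]
        norm_cast
      have hsgn2 : sgn = 1 ∨ sgn = -1 := by
        rcases Int.natAbs_eq (a : ℚ).num with h | h
        · left
          rw [hsgn, h]
          push_cast [hs]
          field_simp
        · right
          rw [hsgn, h]
          push_cast [hs]
          field_simp
      have hsgnmem : sgn ∈ R := by
        rcases hsgn2 with h | h <;> rw [h]
        · exact R.one_mem
        · exact R.neg_mem R.one_mem
      have huval : (a : ℚ) / (s : ℚ) = sgn / (((a : ℚ).den : ℚ)) := by
        rw [hsgn]
        conv_lhs => rw [← Rat.num_div_den (a : ℚ)]
        rw [div_div, div_div, mul_comm]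
      have hdinv : (((a : ℚ).den : ℚ))⁻¹ ∈ R := den_inv_mem R a.2
      have humem : (a : ℚ) / (s : ℚ) ∈ R := by
        rw [huval, div_eq_mul_inv]
        exact R.mul_mem hsgnmem hdinv
      have hvmem : sgn * ((a : ℚ).den : ℚ) ∈ R := R.mul_mem hsgnmem (natCast_mem R _)
      have hmul : ((a : ℚ) / (s : ℚ)) * (sgn * ((a : ℚ).den : ℚ)) = 1 := by
        rw [huval]
        rcases hsgn2 with h | h <;> rw [h] <;> field_simp
      refine ⟨s, ⟨⟨(a : ℚ) / (s : ℚ), humem⟩, ⟨sgn * ((a : ℚ).den : ℚ), hvmem⟩, ?_, ?_⟩,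
        Nat.pos_of_ne_zero hs0, ?_, ?_⟩
      · ext; exact hmul
      · ext
        show (sgn * ((a : ℚ).den : ℚ)) * ((a : ℚ) / (s : ℚ)) = 1
        rw [mul_comm]; exact hmul
      · intro p hp hpd hpinv
        exact hex p hp hpd hpinv
      · ext
        show (a : ℚ) = (s : ℚ) * ((a : ℚ) / (s : ℚ))
        field_simp

/-- Every nonzero element of a unital subring of `ℚ` is uniquely a positive integer with no
prime factor invertible in `R`, times a unit of `R`. -/
theorem exists_unique_factorization (R : Subring ℚ) (a : R) (ha : a ≠ 0) :
    ∃! mu : ℕ × Rˣ, 0 < mu.1 ∧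
      (∀ p : ℕ, p.Prime → p ∣ mu.1 → ((p : ℚ)⁻¹ ∉ R)) ∧
      a = (mu.1 : R) * (mu.2 : R) := by
  obtain ⟨m, u, hm, hmp, heq⟩ := exists_fact R ((a : ℚ)).num.natAbs a ha rfl
  refine ⟨(m, u), ⟨hm, hmp, heq⟩, ?_⟩
  rintro ⟨m', u'⟩ ⟨hm', hmp', heq'⟩
  simp only at hm' hmp' heq'
  have hmq0 : (m : ℚ) ≠ 0 := by exact_mod_cast hm.ne'
  have hmq0' : (m' : ℚ) ≠ 0 := by exact_mod_cast hm'.ne'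
  set w : Rˣ := u' * u⁻¹ with hw
  have h1 : (m : R) * (u : R) = (m' : R) * (u' : R) := by rw [← heq, ← heq']
  have h3 : (m : R) = (m' : R) * ((w : R)) := by
    rw [hw, Units.val_mul, ← mul_assoc, ← h1, mul_assoc, Units.mul_inv, mul_one]
  set wq : ℚ := ((w : R) : ℚ) with hwq
  have key : (m : ℚ) = (m' : ℚ) * wq := by
    have := congrArg Subtype.val h3
    push_cast at this
    exact this
  have hwqval : wq = (m : ℚ) / (m' : ℚ) := by
    rw [key]
    field_simp
  have hwq0 : wq ≠ 0 := by
    rw [hwqval]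
    positivity
  have hwqinvmem : wq⁻¹ ∈ R := by
    have h2 : wq * (((w⁻¹ : Rˣ) : R) : ℚ) = 1 := by
      have h := congrArg Subtype.val (Units.mul_inv w)
      push_cast at h
      exact h
    rw [← eq_inv_of_mul_eq_one_left (by rw [mul_comm] at h2; exact h2)]
    exact ((w⁻¹ : Rˣ) : R).2
  have hwqinvval : wq⁻¹ = (m' : ℚ) / (m : ℚ) := by
    rw [hwqval]
    simp
  have hden1 : wq.den = 1 := by
    by_contra hne
    obtain ⟨p, hp, hpdvd⟩ := Nat.exists_prime_and_dvd hne
    have hdvd : (wq.den : ℤ) ∣ (m' : ℤ) := by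
      have h := Rat.den_dvd (m : ℤ) (m' : ℤ)
      rw [Rat.divInt_eq_div] at h
      push_cast at h
      rwa [← hwqval] at h
    have hpm' : p ∣ m' := by
      have := hpdvd.trans (Int.ofNat_dvd.mp hdvd)
      exact this
    exact hmp' p hp hpm' (prime_inv_mem R (wq.den_nz) (den_inv_mem R (by rw [hwq]; exact ((w : Rˣ) : R).2)) hpdvd)
  have hden2 : wq⁻¹.den = 1 := by
    by_contra hne
    obtain ⟨p, hp, hpdvd⟩ := Nat.exists_prime_and_dvd hne
    have hdvd : (wq⁻¹.den : ℤ) ∣ (m : ℤ) := by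
      have h := Rat.den_dvd (m' : ℤ) (m : ℤ)
      rw [Rat.divInt_eq_div] at h
      push_cast at h
      rwa [← hwqinvval] at h
    have hpm : p ∣ m := hpdvd.trans (Int.ofNat_dvd.mp hdvd)
    exact hmp p hp hpm (prime_inv_mem R (wq⁻¹.den_nz) (den_inv_mem R hwqinvmem) hpdvd)
  have hwq1 : wq = 1 := by
    have hx : (wq.num : ℚ) = wq := (Rat.den_eq_one_iff wq).mp hden1
    have hy : (wq⁻¹.num : ℚ) = wq⁻¹ := (Rat.den_eq_one_iff _).mp hden2
    have hprod : (wq.num : ℚ) * (wq⁻¹.num : ℚ) = 1 := by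
      rw [hx, hy]
      field_simp
    have hprodz : wq.num * wq⁻¹.num = 1 := by exact_mod_cast hprod
    have hpos : 0 < wq.num := by
      rw [Rat.num_pos, hwqval]
      positivity
    have hnum1 : wq.num = 1 := Int.eq_one_of_mul_eq_one_right hpos.le hprodz
    rw [← hx, hnum1]
    norm_num
  have hm'm : m' = m := by
    have : (m : ℚ) = (m' : ℚ) := by rw [key, hwq1, mul_one]
    exact_mod_cast this.symm
  have hu'u : u' = u := by
    have hw1 : w = 1 := by
      apply Units.ext
      apply Subtype.ext
      push_cast
      exact hwq1
    have := hw1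
    rw [hw] at this
    calc u' = u' * u⁻¹ * u := by rw [mul_assoc, inv_mul_cancel, mul_one]
      _ = 1 * u := by rw [this]
      _ = u := one_mul u
  rw [hm'm, hu'u]
end

section
/- Let G = H ⊕ K be a direct sum of abelian groups with Hom(H, K) = 0 and Hom(K, H) = 0. Then a subgroup L of G is fully invariant in G if and only if L = (L ∩ H) ⊕ (L ∩ K) with L ∩ H fully invariant in H and L ∩ K fully invariant in K. -/
/-- For `G = H ⊕ K` with no nonzero homomorphisms between `H` and `K`, a subgroup is fully
invariant iff it splits as a product of fully invariant subgroups. -/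
theorem fullyInvariant_prod_iff {H K : Type*} [AddCommGroup H] [AddCommGroup K]
    (hHK : ∀ φ : H →+ K, φ = 0) (hKH : ∀ φ : K →+ H, φ = 0)
    (L : AddSubgroup (H × K)) :
    (∀ ψ : H × K →+ H × K, L.map ψ ≤ L) ↔
      (L = (L.comap (AddMonoidHom.inl H K)).prod (L.comap (AddMonoidHom.inr H K)) ∧
       (∀ φ : H →+ H,
         (L.comap (AddMonoidHom.inl H K)).map φ ≤ L.comap (AddMonoidHom.inl H K)) ∧
       (∀ φ : K →+ K,
         (L.comap (AddMonoidHom.inr H K)).map φ ≤ L.comap (AddMonoidHom.inr H K))) := by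
  constructor
  · intro hL
    refine ⟨?_, ?_, ?_⟩
    · ext ⟨h, k⟩
      simp only [AddSubgroup.mem_prod, AddSubgroup.mem_comap]
      constructor
      · intro hm
        refine ⟨?_, ?_⟩
        · have := hL ((AddMonoidHom.inl H K).comp (AddMonoidHom.fst H K)) ⟨(h, k), hm, rfl⟩
          simpa using this
        · have := hL ((AddMonoidHom.inr H K).comp (AddMonoidHom.snd H K)) ⟨(h, k), hm, rfl⟩
          simpa using this
      · rintro ⟨h1, h2⟩
        have : (h, k) = (h, 0) + (0, k) := by simp
        rw [this]
        exact L.add_mem h1 h2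
    · intro φ x hx
      obtain ⟨y, hy, rfl⟩ := hx
      have := hL ((AddMonoidHom.inl H K).comp (φ.comp (AddMonoidHom.fst H K))) ⟨(y, 0), hy, rfl⟩
      simpa using this
    · intro φ x hx
      obtain ⟨y, hy, rfl⟩ := hx
      have := hL ((AddMonoidHom.inr H K).comp (φ.comp (AddMonoidHom.snd H K))) ⟨(0, y), hy, rfl⟩
      simpa using this
  · rintro ⟨hsplit, hA, hB⟩ ψ x hx
    obtain ⟨⟨h, k⟩, hy, rfl⟩ := hx
    have hKH' := hKH ((AddMonoidHom.fst H K).comp (ψ.comp (AddMonoidHom.inr H K)))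
    have hHK' := hHK ((AddMonoidHom.snd H K).comp (ψ.comp (AddMonoidHom.inl H K)))
    have e1 : (ψ (h, 0)).2 = 0 := by
      have := congrArg (fun f => f.toFun h) hHK'
      simpa using this
    have e2 : (ψ (0, k)).1 = 0 := by
      have := congrArg (fun f => f.toFun k) hKH'
      simpa using this
    have hdec : ψ (h, k) = ((ψ (h, 0)).1, (ψ (0, k)).2) := by
      have : (h, k) = (h, 0) + (0, k) := by simp
      rw [this, map_add]
      ext
      · simp [e2]
      · simp [e1]
    rw [hsplit] at hy ⊢
    simp only [AddSubgroup.mem_prod, AddSubgroup.mem_comap] at hy ⊢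
    obtain ⟨hyh, hyk⟩ := hy
    rw [hdec]
    constructor
    · have := hA ((AddMonoidHom.fst H K).comp (ψ.comp (AddMonoidHom.inl H K)))
        ⟨h, by simpa using hyh, rfl⟩
      simpa using this
    · have := hB ((AddMonoidHom.snd H K).comp (ψ.comp (AddMonoidHom.inr H K)))
        ⟨k, by simpa using hyk, rfl⟩
      simpa using this
end
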